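/- Let Ω ⊆ ℂ² be a nonempty open set, let (t_n)_{n∈ℤ} be nowhere-vanishing holomorphic functions on Ω satisfying the bilinear 2dTHE t_n·∂x∂y t_n − (∂x t_n)·(∂y t_n) = t_{n+1}·t_{n−1} for all n, and set s_{n+1} = (∂y t_n)/t_n − (∂y t_{n+1})/t_{n+1} and r_n = t_{n+1}t_{n−1}/t_n². Fix C ∈ ℂ, C ≠ 0, and let (u_n)_{n∈ℤ} be holomorphic functions on Ω such that for every n ∈ ℤ: ∂x∂y u_n + s_{n+1}·∂x u_n + r_n·u_n = 0, u_{n+1} = C·(∂y u_n + s_{n+1}·u_n), and u_{n−1} = −C⁻¹·r_n⁻¹·∂x u_n. Then the family τ_n := t_n·u_n satisfies the bilinear 2dTHE: τ_n·∂x∂yτ_n − (∂xτ_n)·(∂yτ_n) = τ_{n+1}·τ_{n−1} on Ω for every n ∈ ℤ. -/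

import Mathlib

/-- Partial derivative in the first (x) variable of a function on ℂ². -/
noncomputable def pdx (u : ℂ × ℂ → ℂ) : ℂ × ℂ → ℂ :=
  fun p => deriv (fun t => u (t, p.2)) p.1

/-- Partial derivative in the second (y) variable of a function on ℂ². -/
noncomputable def pdy (u : ℂ × ℂ → ℂ) : ℂ × ℂ → ℂ :=
  fun p => deriv (fun t => u (p.1, t)) p.2

/-!
Write `H f = f ∂x∂y f - ∂x f ∂y f`. For a product, `H (t u) = u² H t + t² H u`. With
`H tₙ = tₙ₊₁ tₙ₋₁ = rₙ tₙ²` and the two Bäcklund relations,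
`τₙ₊₁ τₙ₋₁ = -tₙ² ∂x uₙ (∂y uₙ + sₙ₊₁ uₙ)`, so the difference of the two sides of the equation for
`τₙ` is `tₙ² uₙ` times the linear equation satisfied by `uₙ`.

The product rule for `∂x∂y` needs `x ↦ ∂y f (x, y)` to be holomorphic. This follows from Cauchy's
formula for `∂y f` by differentiating under the integral sign, the integrand being dominated by
Cauchy's estimate for the `x`-derivative.
-/

open Set Metric Filter Topology Complex MeasureTheory
open scoped Real

section Slices

variable {E : Type*} [NormedAddCommGroup E] [NormedSpace ℂ E]

theorem HasFDerivAt.hasDerivAt_sliceX {g : ℂ × ℂ → E} {g' : ℂ × ℂ →L[ℂ] E} {q : ℂ × ℂ}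
    (h : HasFDerivAt g g' q) : HasDerivAt (fun x => g (x, q.2)) (g' (1, 0)) q.1 :=
  h.comp_hasDerivAt q.1 ((hasDerivAt_id q.1).prodMk (hasDerivAt_const q.1 q.2))

theorem HasFDerivAt.hasDerivAt_sliceY {g : ℂ × ℂ → E} {g' : ℂ × ℂ →L[ℂ] E} {q : ℂ × ℂ}
    (h : HasFDerivAt g g' q) : HasDerivAt (fun y => g (q.1, y)) (g' (0, 1)) q.2 :=
  h.comp_hasDerivAt q.2 ((hasDerivAt_const q.2 q.1).prodMk (hasDerivAt_id q.2))

theorem DifferentiableAt.sliceX {g : ℂ × ℂ → E} {q : ℂ × ℂ} (h : DifferentiableAt ℂ g q) :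
    DifferentiableAt ℂ (fun x => g (x, q.2)) q.1 :=
  h.hasFDerivAt.hasDerivAt_sliceX.differentiableAt

theorem DifferentiableAt.sliceY {g : ℂ × ℂ → E} {q : ℂ × ℂ} (h : DifferentiableAt ℂ g q) :
    DifferentiableAt ℂ (fun y => g (q.1, y)) q.2 :=
  h.hasFDerivAt.hasDerivAt_sliceY.differentiableAt

end Slices

theorem pdx_add {f g : ℂ × ℂ → ℂ} {p : ℂ × ℂ} (hf : DifferentiableAt ℂ (fun x => f (x, p.2)) p.1)
    (hg : DifferentiableAt ℂ (fun x => g (x, p.2)) p.1) : pdx (f + g) p = pdx f p + pdx g p :=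
  deriv_add hf hg

theorem pdx_mul {f g : ℂ × ℂ → ℂ} {p : ℂ × ℂ} (hf : DifferentiableAt ℂ (fun x => f (x, p.2)) p.1)
    (hg : DifferentiableAt ℂ (fun x => g (x, p.2)) p.1) :
    pdx (f * g) p = pdx f p * g p + f p * pdx g p :=
  deriv_mul hf hg

theorem pdy_mul {f g : ℂ × ℂ → ℂ} {p : ℂ × ℂ} (hf : DifferentiableAt ℂ (fun y => f (p.1, y)) p.2)
    (hg : DifferentiableAt ℂ (fun y => g (p.1, y)) p.2) :
    pdy (f * g) p = pdy f p * g p + f p * pdy g p :=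
  deriv_mul hf hg

theorem pdx_congr {f g : ℂ × ℂ → ℂ} {p : ℂ × ℂ} (h : f =ᶠ[𝓝 p] g) : pdx f p = pdx g p :=
  (h.comp_tendsto (by fun_prop : Continuous fun x : ℂ => (x, p.2)).continuousAt).deriv_eq

theorem continuous_deriv_circleMap (c : ℂ) (R : ℝ) : Continuous (deriv (circleMap c R)) := by
  rw [show deriv (circleMap c R) = _ from funext (deriv_circleMap c R)]
  exact (continuous_circleMap 0 R).mul continuous_const

theorem differentiableAt_circleIntegral_param {g : ℂ × ℂ → ℂ} {U : Set (ℂ × ℂ)}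
    (hg : DifferentiableOn ℂ g U) (hU : IsOpen U) {x₀ c : ℂ} {ρ R : ℝ} (hρ : 0 < ρ) (hR : 0 ≤ R)
    (hsub : closedBall x₀ ρ ×ˢ sphere c R ⊆ U) :
    DifferentiableAt ℂ (fun x => ∮ w in C(c, R), g (x, w)) x₀ := by
  obtain ⟨M, hM⟩ := ((isCompact_closedBall x₀ ρ).prod (isCompact_sphere c R))
    |>.exists_bound_of_continuousOn (hg.continuousOn.mono hsub)
  have hgU : ∀ x ∈ closedBall x₀ ρ, ∀ w ∈ sphere c R, DifferentiableAt ℂ g (x, w) :=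
    fun x hx w hw => hg.differentiableAt (hU.mem_nhds (hsub ⟨hx, hw⟩))
  have hinner : ball x₀ (ρ / 2) ⊆ closedBall x₀ ρ :=
    ball_subset_closedBall.trans (closedBall_subset_closedBall (by linarith))
  have hball : ∀ x ∈ ball x₀ (ρ / 2), closedBall x (ρ / 2) ⊆ closedBall x₀ ρ := fun x hx =>
    closedBall_subset_closedBall' (by linarith [mem_ball.mp hx])
  -- Cauchy's estimate for the `x`-derivative on discs of radius `ρ / 2`
  have hbound : ∀ x ∈ ball x₀ (ρ / 2), ∀ w ∈ sphere c R,
      ‖fderiv ℂ g (x, w) (1, 0)‖ ≤ M / (ρ / 2) := by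
    intro x hx w hw
    rw [← (hgU x (hinner hx) w hw |>.hasFDerivAt.hasDerivAt_sliceX).deriv]
    refine norm_deriv_le_of_forall_mem_sphere_norm_le (half_pos hρ) ?_ fun z hz => ?_
    · refine DifferentiableOn.diffContOnCl_ball (fun z hz => ?_) (hball x hx)
      exact (hgU z hz w hw).sliceX.differentiableWithinAt
    · exact hM _ ⟨hball x hx (sphere_subset_closedBall hz), hw⟩
  have hcircle : ∀ θ, circleMap c R θ ∈ sphere c R := circleMap_mem_sphere c hR
  have hcont : ∀ x ∈ closedBall x₀ ρ,
      Continuous fun θ => deriv (circleMap c R) θ • g (x, circleMap c R θ) := fun x hx =>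
    (continuous_deriv_circleMap c R).smul
      (hg.continuousOn.comp_continuous (by fun_prop) fun θ => hsub ⟨hx, hcircle θ⟩)
  refine (intervalIntegral.hasDerivAt_integral_of_dominated_loc_of_deriv_le
    (F' := fun x θ => deriv (circleMap c R) θ • fderiv ℂ g (x, circleMap c R θ) (1, 0))
    (bound := fun _ => R * (M / (ρ / 2))) (ball_mem_nhds x₀ (half_pos hρ)) ?_
    ((hcont x₀ (mem_closedBall_self hρ.le)).intervalIntegrable _ _) ?_ ?_
    intervalIntegrable_const ?_).2.differentiableAt
  · filter_upwards [closedBall_mem_nhds x₀ hρ] with x hx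
    exact (hcont x hx).aestronglyMeasurable
  · have hslice : Continuous fun θ => (x₀, circleMap c R θ) := by fun_prop
    exact ((continuous_deriv_circleMap c R).measurable.smul
      ((measurable_fderiv_apply_const ℂ g (1, 0)).comp hslice.measurable)).aestronglyMeasurable
  · refine Eventually.of_forall fun θ _ x hx => ?_
    rw [norm_smul, deriv_circleMap, norm_mul, norm_circleMap_zero, norm_I, mul_one,
      abs_of_nonneg hR]
    exact mul_le_mul_of_nonneg_left (hbound x hx _ (hcircle θ)) hR
  · refine Eventually.of_forall fun θ _ x hx => ?_
    exact (hgU x (hinner hx) _ (hcircle θ)).hasFDerivAt.hasDerivAt_sliceX.const_smul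
      (deriv (circleMap c R) θ)

theorem differentiableAt_pdy_sliceX {Ω : Set (ℂ × ℂ)} {f : ℂ × ℂ → ℂ}
    (hf : DifferentiableOn ℂ f Ω) (hΩ : IsOpen Ω) {p : ℂ × ℂ} (hp : p ∈ Ω) :
    DifferentiableAt ℂ (fun x => pdy f (x, p.2)) p.1 := by
  obtain ⟨ε, hε, hpε⟩ := Metric.isOpen_iff.mp hΩ p hp
  have hr : 0 < ε / 2 := half_pos hε
  have hcauchy : (fun x => pdy f (x, p.2)) =ᶠ[𝓝 p.1]
      fun x => cderiv (ε / 2) (fun w => f (x, w)) p.2 := by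
    filter_upwards [ball_mem_nhds p.1 hε] with x hx
    refine (cderiv_eq_deriv isOpen_ball (fun w hw => ?_) hr
      (closedBall_subset_ball (half_lt_self hε))).symm
    have hxw : ((x, w) : ℂ × ℂ) ∈ Ω := hpε (by rw [mem_ball, Prod.dist_eq]; exact max_lt hx hw)
    exact (hf.differentiableAt (hΩ.mem_nhds hxw)).sliceY.differentiableWithinAt
  refine DifferentiableAt.congr_of_eventuallyEq ?_ hcauchy
  refine (differentiableAt_circleIntegral_param (g := fun q => ((q.2 - p.2) ^ 2)⁻¹ • f q)
    (U := ball p ε ∩ {q | q.2 ≠ p.2}) ?_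
    (isOpen_ball.inter (isOpen_ne_fun (by fun_prop) (by fun_prop))) hr hr.le ?_).const_smul
    (2 * π * I : ℂ)⁻¹
  · refine DifferentiableOn.fun_smul (c := fun q : ℂ × ℂ => ((q.2 - p.2) ^ 2)⁻¹) (fun q hq => ?_)
      (hf.mono (inter_subset_left.trans hpε))
    exact ((differentiableAt_snd.sub_const p.2).pow 2).inv (pow_ne_zero 2 (sub_ne_zero.mpr hq.2))
      |>.differentiableWithinAt
  · rintro ⟨x, w⟩ ⟨hx, hw⟩
    refine ⟨?_, ne_of_mem_sphere hw hr.ne'⟩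
    rw [mem_ball, Prod.dist_eq]
    exact max_lt ((mem_closedBall.mp hx).trans_lt (half_lt_self hε))
      ((mem_sphere.mp hw).trans_lt (half_lt_self hε))

/-- Half the Hirota bilinear derivative `Dx Dy f·f`. -/
noncomputable def hirotaXY (f : ℂ × ℂ → ℂ) (p : ℂ × ℂ) : ℂ :=
  f p * pdx (pdy f) p - pdx f p * pdy f p

theorem hirotaXY_mul {Ω : Set (ℂ × ℂ)} {f g : ℂ × ℂ → ℂ} (hf : DifferentiableOn ℂ f Ω)
    (hg : DifferentiableOn ℂ g Ω) (hΩ : IsOpen Ω) {p : ℂ × ℂ} (hp : p ∈ Ω) :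
    hirotaXY (f * g) p = g p ^ 2 * hirotaXY f p + f p ^ 2 * hirotaXY g p := by
  have hfp := hf.differentiableAt (hΩ.mem_nhds hp)
  have hgp := hg.differentiableAt (hΩ.mem_nhds hp)
  have hpdy : pdy (f * g) =ᶠ[𝓝 p] pdy f * g + f * pdy g := by
    filter_upwards [hΩ.mem_nhds hp] with q hq
    exact pdy_mul (hf.differentiableAt (hΩ.mem_nhds hq)).sliceY
      (hg.differentiableAt (hΩ.mem_nhds hq)).sliceY
  have hpdx_pdy : pdx (pdy (f * g)) p = pdx (pdy f) p * g p + pdy f p * pdx g p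
      + (pdx f p * pdy g p + f p * pdx (pdy g) p) := by
    have hf' := differentiableAt_pdy_sliceX hf hΩ hp
    have hg' := differentiableAt_pdy_sliceX hg hΩ hp
    rw [pdx_congr hpdy, pdx_add (hf'.mul hgp.sliceX) (hfp.sliceX.mul hg'),
      pdx_mul hf' hgp.sliceX, pdx_mul hfp.sliceX hg']
  simp only [hirotaXY, hpdx_pdy, pdx_mul hfp.sliceX hgp.sliceX, pdy_mul hfp.sliceY hgp.sliceY,
    Pi.mul_apply]
  ring

theorem backlund_transformation_produces_toda_hirota_solution_general
    (Ω : Set (ℂ × ℂ)) (hΩ : IsOpen Ω)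
    (t : ℤ → ℂ × ℂ → ℂ)
    (htdiff : ∀ n : ℤ, DifferentiableOn ℂ (t n) Ω)
    (ht0 : ∀ n : ℤ, ∀ p ∈ Ω, t n p ≠ 0)
    (hTHE : ∀ n : ℤ, ∀ p ∈ Ω,
      t n p * pdx (pdy (t n)) p - pdx (t n) p * pdy (t n) p = t (n + 1) p * t (n - 1) p)
    (s r : ℤ → ℂ × ℂ → ℂ)
    (hr : ∀ n : ℤ, ∀ p, r n p = t (n + 1) p * t (n - 1) p / (t n p) ^ 2)
    (C : ℂ) (hC : C ≠ 0)
    (u : ℤ → ℂ × ℂ → ℂ)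
    (hudiff : ∀ n : ℤ, DifferentiableOn ℂ (u n) Ω)
    (hMu : ∀ n : ℤ, ∀ p ∈ Ω,
      pdx (pdy (u n)) p + s (n + 1) p * pdx (u n) p + r n p * u n p = 0)
    (hup : ∀ n : ℤ, ∀ p ∈ Ω, u (n + 1) p = C * (pdy (u n) p + s (n + 1) p * u n p))
    (hdown : ∀ n : ℤ, ∀ p ∈ Ω, u (n - 1) p = -C⁻¹ * (r n p)⁻¹ * pdx (u n) p)
    (τ : ℤ → ℂ × ℂ → ℂ)
    (hτ : ∀ n : ℤ, ∀ p, τ n p = t n p * u n p) :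
    ∀ n : ℤ, ∀ p ∈ Ω,
      τ n p * pdx (pdy (τ n)) p - pdx (τ n) p * pdy (τ n) p = τ (n + 1) p * τ (n - 1) p := by
  intro n p hp
  have hT := ht0 n p hp
  have hrT : r n p * t n p ^ 2 = t (n + 1) p * t (n - 1) p := by
    rw [hr]
    field_simp
  have hr0 : r n p ≠ 0 := by
    rw [hr]
    exact div_ne_zero (mul_ne_zero (ht0 _ p hp) (ht0 _ p hp)) (pow_ne_zero 2 hT)
  have hneighbours : τ (n + 1) p * τ (n - 1) p
      = -(t n p ^ 2 * pdx (u n) p * (pdy (u n) p + s (n + 1) p * u n p)) := by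
    rw [hτ, hτ, hup n p hp, hdown n p hp]
    field_simp
    linear_combination (pdy (u n) p + s (n + 1) p * u n p) * pdx (u n) p * hrT
  change hirotaXY (τ n) p = _
  rw [show τ n = t n * u n from funext (hτ n), hirotaXY_mul (htdiff n) (hudiff n) hΩ hp,
    hneighbours]
  simp only [hirotaXY]
  linear_combination u n p ^ 2 * (hTHE n p hp - hrT) + t n p ^ 2 * u n p * hMu n p hp

theorem backlund_transformation_produces_toda_hirota_solution
    (Ω : Set (ℂ × ℂ)) (hΩ : IsOpen Ω) (hne : Ω.Nonempty)
    (t : ℤ → ℂ × ℂ → ℂ)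
    (htdiff : ∀ n : ℤ, DifferentiableOn ℂ (t n) Ω)
    (ht0 : ∀ n : ℤ, ∀ p ∈ Ω, t n p ≠ 0)
    (hTHE : ∀ n : ℤ, ∀ p ∈ Ω,
      t n p * pdx (pdy (t n)) p - pdx (t n) p * pdy (t n) p = t (n + 1) p * t (n - 1) p)
    (s r : ℤ → ℂ × ℂ → ℂ)
    (hs : ∀ n : ℤ, ∀ p, s (n + 1) p = pdy (t n) p / t n p - pdy (t (n + 1)) p / t (n + 1) p)
    (hr : ∀ n : ℤ, ∀ p, r n p = t (n + 1) p * t (n - 1) p / (t n p) ^ 2)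
    (C : ℂ) (hC : C ≠ 0)
    (u : ℤ → ℂ × ℂ → ℂ)
    (hudiff : ∀ n : ℤ, DifferentiableOn ℂ (u n) Ω)
    (hMu : ∀ n : ℤ, ∀ p ∈ Ω,
      pdx (pdy (u n)) p + s (n + 1) p * pdx (u n) p + r n p * u n p = 0)
    (hup : ∀ n : ℤ, ∀ p ∈ Ω, u (n + 1) p = C * (pdy (u n) p + s (n + 1) p * u n p))
    (hdown : ∀ n : ℤ, ∀ p ∈ Ω, u (n - 1) p = -C⁻¹ * (r n p)⁻¹ * pdx (u n) p)
    (τ : ℤ → ℂ × ℂ → ℂ)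
    (hτ : ∀ n : ℤ, ∀ p, τ n p = t n p * u n p) :
    ∀ n : ℤ, ∀ p ∈ Ω,
      τ n p * pdx (pdy (τ n)) p - pdx (τ n) p * pdy (τ n) p = τ (n + 1) p * τ (n - 1) p :=
  backlund_transformation_produces_toda_hirota_solution_general Ω hΩ t htdiff ht0 hTHE s r hr C hC u
    hudiff hMu hup hdown τ hτ
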